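/- arXiv:1010.2787 — 2 statements merged into one kernel-verified Lean document; each statement's English description precedes it below -/
import Mathlib

section
/- Let σ^2 > 0 and let X, Y, I be nonnegative real random variables on a common probability space with X and Y identically distributed, E[log_2(1 + X/σ^2)] finite, and E[I] finite. Then E[log_2(1 + X/σ^2)] − E[log_2(1 + Y/(I + σ^2))] ≤ log_2(1 + E[I]/σ^2). -/
open MeasureTheory ProbabilityTheory

/-!
Since `(1 + y/(i+σ²)) (1 + i/σ²) = 1 + (y+i)/σ² ≥ 1 + y/σ²`, the rate loss is pointwise at most
`log₂(1 + I/σ²)` once `E[log₂(1 + X/σ²)]` is replaced by the equal `E[log₂(1 + Y/σ²)]`; Jensen's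
inequality for the concave logarithm then bounds `E[log₂(1 + I/σ²)]` by `log₂(1 + E[I]/σ²)`.
-/

open Real Set

@[fun_prop]
theorem Real.measurable_logb {b : ℝ} : Measurable (logb b) :=
  measurable_log.div_const _

theorem Real.concaveOn_logb_Ici_one {b : ℝ} (hb : 1 < b) : ConcaveOn ℝ (Ici 1) (logb b) := by
  have hlogb : logb b = fun x => (log b)⁻¹ • log x := by
    funext x
    rw [smul_eq_mul, inv_mul_eq_div, logb]
  rw [hlogb]
  exact (strictConcaveOn_log_Ioi.concaveOn.subset (Ici_subset_Ioi.2 zero_lt_one)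
    (convex_Ici 1)).smul (inv_nonneg.2 (log_pos hb).le)

theorem Real.logb_one_add_le {b z : ℝ} (hb : 1 < b) (hz : 0 ≤ z) : logb b (1 + z) ≤ z / log b := by
  rw [logb]
  gcongr
  · exact (log_pos hb).le
  · linarith [log_le_sub_one_of_pos (x := 1 + z) (by linarith)]

theorem Real.logb_one_add_div_le_add {b y i s : ℝ} (hb : 1 < b) (hy : 0 ≤ y) (hi : 0 ≤ i)
    (hs : 0 < s) : logb b (1 + y / s) ≤ logb b (1 + y / (i + s)) + logb b (1 + i / s) := by
  have hdecomp : (1 + y / (i + s)) * (1 + i / s) = 1 + (y + i) / s := by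
    field_simp
    ring
  rw [← logb_mul (by positivity) (by positivity), hdecomp]
  gcongr
  linarith

theorem Real.abs_logb_one_add_div_add_le {b y i s : ℝ} (hb : 1 < b) (hy : 0 ≤ y) (hi : 0 ≤ i)
    (hs : 0 < s) : |logb b (1 + y / (i + s))| ≤ logb b (1 + y / s) := by
  rw [abs_of_nonneg (logb_nonneg hb (by simp only [le_add_iff_nonneg_right]; positivity))]
  gcongr
  linarith

section Jensen

variable {Ω : Type*} [MeasurableSpace Ω] {μ : Measure Ω} {b : ℝ} {Z : Ω → ℝ}

theorem MeasureTheory.Integrable.logb_one_add (hb : 1 < b) (hZ : 0 ≤ᵐ[μ] Z)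
    (hZi : Integrable Z μ) : Integrable (fun ω => logb b (1 + Z ω)) μ := by
  have hZm := hZi.aemeasurable
  refine (hZi.div_const (log b)).mono' (by fun_prop : AEMeasurable _ μ).aestronglyMeasurable ?_
  filter_upwards [hZ] with ω hω
  rw [norm_eq_abs, abs_of_nonneg (logb_nonneg hb (by simpa using hω))]
  exact logb_one_add_le hb hω

theorem integral_logb_one_add_le [IsProbabilityMeasure μ] (hb : 1 < b) (hZ : 0 ≤ᵐ[μ] Z)
    (hZi : Integrable Z μ) : ∫ ω, logb b (1 + Z ω) ∂μ ≤ logb b (1 + ∫ ω, Z ω ∂μ) := by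
  have hjensen := (concaveOn_logb_Ici_one hb).le_map_integral
    (continuousOn_logb.mono fun x (hx : 1 ≤ x) => (zero_lt_one.trans_le hx).ne')
    isClosed_Ici (by filter_upwards [hZ] with ω hω using by simpa using hω)
    ((integrable_const 1).add hZi) (hZi.logb_one_add hb hZ)
  simp only [Pi.add_apply] at hjensen
  rwa [integral_add (integrable_const 1) hZi, integral_const, probReal_univ, one_smul] at hjensen

end Jensen

theorem stmt_6_general {Ω : Type*} [MeasurableSpace Ω] (μ : Measure Ω) [IsProbabilityMeasure μ]
    (σ2 : ℝ) (hσ2 : 0 < σ2)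
    (X Y I : Ω → ℝ)
    (hYpos : ∀ᵐ ω ∂μ, 0 ≤ Y ω) (hIpos : ∀ᵐ ω ∂μ, 0 ≤ I ω)
    (hXY : IdentDistrib X Y μ μ)
    (hint1 : Integrable (fun ω => Real.logb 2 (1 + X ω / σ2)) μ)
    (hint2 : Integrable I μ) :
    (∫ ω, Real.logb 2 (1 + X ω / σ2) ∂μ)
        - ∫ ω, Real.logb 2 (1 + Y ω / (I ω + σ2)) ∂μ
      ≤ Real.logb 2 (1 + (∫ ω, I ω ∂μ) / σ2) := by
  have hf : IdentDistrib (fun ω => logb 2 (1 + X ω / σ2)) (fun ω => logb 2 (1 + Y ω / σ2)) μ μ :=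
    hXY.comp (u := fun t => logb 2 (1 + t / σ2)) (by fun_prop)
  have hfY : Integrable (fun ω => logb 2 (1 + Y ω / σ2)) μ := hf.integrable_iff.mp hint1
  have hY := hXY.aemeasurable_snd
  have hI := hint2.aemeasurable
  have hg : Integrable (fun ω => logb 2 (1 + Y ω / (I ω + σ2))) μ := by
    refine hfY.mono' (by fun_prop : AEMeasurable _ μ).aestronglyMeasurable ?_
    filter_upwards [hYpos, hIpos] with ω hYω hIω
    exact abs_logb_one_add_div_add_le one_lt_two hYω hIω hσ2
  have hIσ : 0 ≤ᵐ[μ] fun ω => I ω / σ2 := by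
    filter_upwards [hIpos] with ω hω using div_nonneg hω hσ2.le
  calc (∫ ω, logb 2 (1 + X ω / σ2) ∂μ) - ∫ ω, logb 2 (1 + Y ω / (I ω + σ2)) ∂μ
      = ∫ ω, logb 2 (1 + Y ω / σ2) - logb 2 (1 + Y ω / (I ω + σ2)) ∂μ := by
        rw [hf.integral_eq, integral_sub hfY hg]
    _ ≤ ∫ ω, logb 2 (1 + I ω / σ2) ∂μ := by
        refine integral_mono_ae (hfY.sub hg) ((hint2.div_const σ2).logb_one_add one_lt_two hIσ) ?_
        filter_upwards [hYpos, hIpos] with ω hYω hIω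
        linarith [logb_one_add_div_le_add one_lt_two hYω hIω hσ2]
    _ ≤ logb 2 (1 + (∫ ω, I ω ∂μ) / σ2) := by
        rw [← integral_div]
        exact integral_logb_one_add_le one_lt_two hIσ (hint2.div_const σ2)

/-- Single-stream rate-loss bound: if `X, Y, I` are nonnegative random variables with `X` and
`Y` identically distributed, `E[log₂(1 + X/σ²)]` finite and `E[I]` finite, then
`E[log₂(1 + X/σ²)] − E[log₂(1 + Y/(I + σ²))] ≤ log₂(1 + E[I]/σ²)`. -/
theorem stmt_6 {Ω : Type*} [MeasurableSpace Ω] (μ : Measure Ω) [IsProbabilityMeasure μ]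
    (σ2 : ℝ) (hσ2 : 0 < σ2)
    (X Y I : Ω → ℝ)
    (hXmeas : Measurable X) (hYmeas : Measurable Y) (hImeas : Measurable I)
    (hXpos : ∀ᵐ ω ∂μ, 0 ≤ X ω) (hYpos : ∀ᵐ ω ∂μ, 0 ≤ Y ω) (hIpos : ∀ᵐ ω ∂μ, 0 ≤ I ω)
    (hXY : IdentDistrib X Y μ μ)
    (hint1 : Integrable (fun ω => Real.logb 2 (1 + X ω / σ2)) μ)
    (hint2 : Integrable I μ) :
    (∫ ω, Real.logb 2 (1 + X ω / σ2) ∂μ)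
        - ∫ ω, Real.logb 2 (1 + Y ω / (I ω + σ2)) ∂μ
      ≤ Real.logb 2 (1 + (∫ ω, I ω ∂μ) / σ2) :=
  stmt_6_general μ σ2 hσ2 X Y I hYpos hIpos hXY hint1 hint2
end

section
/- (Theorem 1, abstract form.) Let K be a positive integer, d_1, ..., d_K positive integers, σ^2 > 0, P > 0, P_f > 0, α > 0 with P = α P_f, and c ≥ 0. On a common probability space, for each user i ∈ {1,...,K} and each stream m ∈ {1,...,d_i}, let S_{i,m} and Ŝ_{i,m} be identically distributed nonnegative random variables with E[log_2(1 + (P/d_i) S_{i,m}/σ^2)] finite, and let the interference be I_{i,m} = Σ_{(k,ℓ) ≠ (i,m)} (P/d_k) J^{i,m}_{k,ℓ}, where the sum runs over k ∈ {1,...,K}, ℓ ∈ {1,...,d_k}, (k,ℓ) ≠ (i,m), and each J^{i,m}_{k,ℓ} is a nonnegative random variable with E[J^{i,m}_{k,ℓ}] ≤ c σ^2 / P_f. Then the sum-rate loss ΔR = Σ_{i=1}^K Σ_{m=1}^{d_i} ( E[log_2(1 + (P/d_i) S_{i,m}/σ^2)] − E[log_2(1 + (P/d_i) Ŝ_{i,m}/(I_{i,m}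 + σ^2))] ) satisfies ΔR ≤ Σ_{i=1}^K d_i log_2(1 + α c (K − 1/d_i)). In particular, for fixed α and c the loss is bounded by a constant independent of P. -/
/-!
Fix a stream with gain `a = P / d_i`. Since `S` and `Ŝ` are identically distributed, the
perfect-CSI rate is `E[log(1 + a Ŝ / σ²)]`. Pointwise
`(1 + a Ŝ / (I + σ²)) (1 + I / σ²) ≥ 1 + a Ŝ / σ²`, so the rate loss of the stream is at most
`E[log(1 + I / σ²)]`, which Jensen's inequality bounds by `log(1 + E[I] / σ²)`. Finally
`E[I] ≤ (P c σ² / P_f) Σ_{(k,ℓ) ≠ (i,m)} 1 / d_k = α c σ² (K − 1 / d_i)`.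
-/

open MeasureTheory ProbabilityTheory Real Set

section Logb

variable {b σ : ℝ}

theorem logb_one_add_div_le_add (hb : 1 < b) (hσ : 0 < σ) {x I : ℝ} (hx : 0 ≤ x) (hI : 0 ≤ I) :
    logb b (1 + x / σ) ≤ logb b (1 + x / (I + σ)) + logb b (1 + I / σ) := by
  have hIσ : 0 < I + σ := by positivity
  rw [← logb_mul (by positivity) (by positivity)]
  refine logb_le_logb_of_le hb (by positivity) ?_
  have hprod : (1 + x / (I + σ)) * (1 + I / σ) = 1 + x / σ + I / σ := by
    field_simp
    ring
  rw [hprod]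
  linarith [div_nonneg hI hσ.le]

theorem concaveOn_logb_one_add_div (hb : 1 < b) (hσ : 0 < σ) :
    ConcaveOn ℝ (Ici 0) fun x => logb b (1 + x / σ) := by
  refine ⟨convex_Ici 0, fun x hx y hy p q hp hq hpq => ?_⟩
  have hx : (0 : ℝ) ≤ x := hx
  have hy : (0 : ℝ) ≤ y := hy
  have hlog := strictConcaveOn_log_Ioi.concaveOn.2 (x := 1 + x / σ) (y := 1 + y / σ)
    (mem_Ioi.2 (by positivity)) (mem_Ioi.2 (by positivity)) hp hq hpq
  have hcomb : p • (1 + x / σ) + q • (1 + y / σ) = 1 + (p • x + q • y) / σ := by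
    simp only [smul_eq_mul]
    field_simp
    linear_combination σ * hpq
  rw [hcomb] at hlog
  simp only [logb, smul_eq_mul] at hlog ⊢
  calc _ = (p * log (1 + x / σ) + q * log (1 + y / σ)) / log b := by ring
    _ ≤ _ := div_le_div_of_nonneg_right hlog (log_pos hb).le

theorem continuousOn_logb_one_add_div (hσ : 0 < σ) :
    ContinuousOn (fun x => logb b (1 + x / σ)) (Ici 0) :=
  ((continuous_const.add (continuous_id.div_const σ)).continuousOn.log fun x (hx : 0 ≤ x) =>
    (add_pos_of_pos_of_nonneg one_pos (div_nonneg hx hσ.le)).ne').div_const _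

end Logb

section Integral

variable {Ω : Type*} [MeasurableSpace Ω] {μ : Measure Ω} {b σ : ℝ}

theorem MeasureTheory.Integrable.logb_one_add_div (hb : 1 < b) (hσ : 0 < σ) {f : Ω → ℝ}
    (hfi : Integrable f μ) (hf : ∀ᵐ ω ∂μ, 0 ≤ f ω) :
    Integrable (fun ω => logb b (1 + f ω / σ)) μ := by
  refine ((hfi.div_const σ).div_const (log b)).mono'
    (((hfi.aemeasurable.div_const σ).const_add 1).log.div_const _).aestronglyMeasurable ?_
  filter_upwards [hf] with ω hω
  have hratio : 0 ≤ f ω / σ := div_nonneg hω hσ.le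
  rw [norm_of_nonneg (logb_nonneg hb (by linarith))]
  exact div_le_div_of_nonneg_right
    ((log_le_sub_one_of_pos (by positivity)).trans (by linarith)) (log_pos hb).le

theorem integral_logb_one_add_div_le [IsProbabilityMeasure μ] (hb : 1 < b) (hσ : 0 < σ)
    {f : Ω → ℝ} (hfi : Integrable f μ) (hf : ∀ᵐ ω ∂μ, 0 ≤ f ω) :
    ∫ ω, logb b (1 + f ω / σ) ∂μ ≤ logb b (1 + (∫ ω, f ω ∂μ) / σ) :=
  (concaveOn_logb_one_add_div hb hσ).le_map_integral (continuousOn_logb_one_add_div hσ)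
    isClosed_Ici hf hfi (hfi.logb_one_add_div hb hσ hf)

theorem integral_logb_snr_sub_integral_logb_sinr_le [IsProbabilityMeasure μ] (hb : 1 < b)
    (hσ : 0 < σ) {X Y I : Ω → ℝ} (hXY : IdentDistrib X Y μ μ) (hY : ∀ᵐ ω ∂μ, 0 ≤ Y ω)
    (hI : ∀ᵐ ω ∂μ, 0 ≤ I ω) (hIi : Integrable I μ)
    (hXi : Integrable (fun ω => logb b (1 + X ω / σ)) μ) :
    ∫ ω, logb b (1 + X ω / σ) ∂μ - ∫ ω, logb b (1 + Y ω / (I ω + σ)) ∂μ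
      ≤ logb b (1 + (∫ ω, I ω ∂μ) / σ) := by
  have hsnr : IdentDistrib (fun ω => logb b (1 + X ω / σ)) (fun ω => logb b (1 + Y ω / σ)) μ μ :=
    hXY.comp (((measurable_id.div_const σ).const_add 1).log.div_const _)
  have hYi := hsnr.integrable_iff.1 hXi
  have hsinr_bounds : ∀ᵐ ω ∂μ, 0 ≤ logb b (1 + Y ω / (I ω + σ)) ∧
      logb b (1 + Y ω / (I ω + σ)) ≤ logb b (1 + Y ω / σ) := by
    filter_upwards [hY, hI] with ω hYω hIω
    have hratio : 0 ≤ Y ω / (I ω + σ) := by positivity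
    refine ⟨logb_nonneg hb (by linarith), logb_le_logb_of_le hb (by positivity) ?_⟩
    gcongr
    linarith
  have hsinr_meas : AEStronglyMeasurable (fun ω => logb b (1 + Y ω / (I ω + σ))) μ :=
    ((hXY.aemeasurable_snd.div (hIi.aemeasurable.add_const σ)).const_add 1).log.div_const _
      |>.aestronglyMeasurable
  have hZi : Integrable (fun ω => logb b (1 + Y ω / (I ω + σ))) μ :=
    hYi.mono' hsinr_meas <| hsinr_bounds.mono fun _ h => (norm_of_nonneg h.1).trans_le h.2
  calc _ = ∫ ω, logb b (1 + Y ω / σ) - logb b (1 + Y ω / (I ω + σ)) ∂μ := by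
        rw [hsnr.integral_eq, integral_sub hYi hZi]
    _ ≤ ∫ ω, logb b (1 + I ω / σ) ∂μ := by
        refine integral_mono_ae (hYi.sub hZi) (hIi.logb_one_add_div hb hσ hI) ?_
        filter_upwards [hY, hI] with ω hYω hIω
        linarith [logb_one_add_div_le_add hb hσ hYω hIω]
    _ ≤ _ := integral_logb_one_add_div_le hb hσ hIi hI

theorem integral_sum_mul_le {ι : Type*} {t : Finset ι} {w : ι → ℝ} {J : ι → Ω → ℝ} {B : ℝ}
    (hw : ∀ p ∈ t, 0 ≤ w p) (hJ : ∀ p ∈ t, Integrable (J p) μ)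
    (hB : ∀ p ∈ t, ∫ ω, J p ω ∂μ ≤ B) :
    ∫ ω, ∑ p ∈ t, w p * J p ω ∂μ ≤ (∑ p ∈ t, w p) * B := by
  rw [integral_finsetSum _ fun p hp => (hJ p hp).const_mul _, Finset.sum_mul]
  refine Finset.sum_le_sum fun p hp => ?_
  rw [integral_const_mul]
  exact mul_le_mul_of_nonneg_left (hB p hp) (hw p hp)

theorem sum_erase_one_div_fiber_card {ι : Type*} [Fintype ι] [DecidableEq ι] {d : ι → ℕ}
    (hd : ∀ i, 0 < d i) (s : Σ i, Fin (d i)) :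
    ∑ p ∈ Finset.univ.erase s, (1 / d p.1 : ℝ) = Fintype.card ι - 1 / d s.1 := by
  have hfiber : ∀ i, ∑ _m : Fin (d i), (1 / d i : ℝ) = 1 := fun i => by
    have := hd i
    simp [field]
  rw [eq_sub_iff_add_eq, Finset.sum_erase_add _ _ (Finset.mem_univ s), Fintype.sum_sigma,
    Fintype.sum_congr _ _ hfiber]
  simp

theorem integral_sum_erase_div_fiber_card_mul_le {ι : Type*} [Fintype ι] [DecidableEq ι]
    {d : ι → ℕ} (hd : ∀ i, 0 < d i) {P B : ℝ} (hP : 0 ≤ P) {J : (Σ i, Fin (d i)) → Ω → ℝ}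
    (hJ : ∀ p, Integrable (J p) μ) (hB : ∀ p, ∫ ω, J p ω ∂μ ≤ B) (s : Σ i, Fin (d i)) :
    ∫ ω, ∑ p ∈ Finset.univ.erase s, P / d p.1 * J p ω ∂μ
      ≤ P * B * (Fintype.card ι - 1 / d s.1) := by
  calc _ ≤ (∑ p ∈ Finset.univ.erase s, P / d p.1) * B :=
        integral_sum_mul_le (fun p _ => by positivity) (fun p _ => hJ p) fun p _ => hB p
    _ = _ := by
      simp_rw [div_eq_mul_one_div P, ← Finset.mul_sum, sum_erase_one_div_fiber_card hd s]
      ring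

end Integral

theorem sum_sigma_fin_fst {ι : Type*} [Fintype ι] (d : ι → ℕ) (f : ι → ℝ) :
    ∑ s : Σ i, Fin (d i), f s.1 = ∑ i, (d i : ℝ) * f i := by
  simp [Fintype.sum_sigma]

theorem stmt_9_general {Ω : Type*} [MeasurableSpace Ω] (μ : Measure Ω) [IsProbabilityMeasure μ]
    (K : ℕ) (d : Fin K → ℕ) (hd : ∀ i, 0 < d i)
    (σ2 P Pf α c : ℝ) (hσ2 : 0 < σ2) (hP : 0 < P) (hPf : 0 < Pf)
    (hPα : P = α * Pf)
    (S Shat : (Σ i : Fin K, Fin (d i)) → Ω → ℝ)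
    (J : (Σ i : Fin K, Fin (d i)) → (Σ i : Fin K, Fin (d i)) → Ω → ℝ)
    (hShatpos : ∀ s, ∀ᵐ ω ∂μ, 0 ≤ Shat s ω)
    (hident : ∀ s, IdentDistrib (S s) (Shat s) μ μ)
    (hSint : ∀ s, Integrable (fun ω => Real.logb 2 (1 + (P / d s.1) * S s ω / σ2)) μ)
    (hJpos : ∀ s p, ∀ᵐ ω ∂μ, 0 ≤ J s p ω)
    (hJint : ∀ s p, Integrable (J s p) μ)
    (hJmean : ∀ s p, ∫ ω, J s p ω ∂μ ≤ c * σ2 / Pf) :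
    ∑ s : Σ i : Fin K, Fin (d i),
      ((∫ ω, Real.logb 2 (1 + (P / d s.1) * S s ω / σ2) ∂μ)
        - ∫ ω, Real.logb 2 (1 + (P / d s.1) * Shat s ω
            / ((∑ p ∈ Finset.univ.erase s, (P / d p.1) * J s p ω) + σ2)) ∂μ)
      ≤ ∑ i : Fin K, (d i : ℝ) * Real.logb 2 (1 + α * c * (K - 1 / d i)) := by
  have hweight : ∀ p : Σ i : Fin K, Fin (d i), 0 ≤ P / d p.1 := fun p => by positivity
  refine (Finset.sum_le_sum fun s _ => ?_).trans_eq (sum_sigma_fin_fst d _)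
  have hI : ∀ᵐ ω ∂μ, 0 ≤ ∑ p ∈ Finset.univ.erase s, (P / d p.1) * J s p ω := by
    filter_upwards [ae_all_iff.2 (hJpos s)] with ω hω
    exact Finset.sum_nonneg fun p _ => mul_nonneg (hweight p) (hω p)
  have hImean : ∫ ω, ∑ p ∈ Finset.univ.erase s, (P / d p.1) * J s p ω ∂μ
      ≤ α * c * (K - 1 / d s.1) * σ2 := by
    refine (integral_sum_erase_div_fiber_card_mul_le hd hP.le (hJint s) (hJmean s) s).trans_eq ?_
    rw [Fintype.card_fin, hPα]
    field_simp
  have hYpos : ∀ᵐ ω ∂μ, 0 ≤ P / d s.1 * Shat s ω := by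
    filter_upwards [hShatpos s] with ω hω
    exact mul_nonneg (hweight s) hω
  refine (integral_logb_snr_sub_integral_logb_sinr_le one_lt_two hσ2
    ((hident s).comp (measurable_const_mul (P / d s.1))) hYpos hI
    (integrable_finsetSum _ fun p _ => (hJint s p).const_mul _) (hSint s)).trans ?_
  have hI0 := integral_nonneg_of_ae hI
  refine logb_le_logb_of_le one_lt_two (by positivity) ?_
  gcongr
  rwa [div_le_iff₀ hσ2]

/-- Theorem 1 of the paper, abstract form. Streams are indexed by pairs `s = (i, m)` with
`i ∈ {1,…,K}` and `m ∈ {1,…,d i}`. `S s` and `Shat s` are the identically distributed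
perfect- and imperfect-CSI desired signal powers, and the interference at stream `s` is
`I s = Σ_{p ≠ s} (P / d_{p.1}) J s p` with `E[J s p] ≤ c σ² / P_f`. If `P = α P_f` then the
sum-rate loss is at most `Σ_i d_i log₂(1 + α c (K − 1/d_i))`, a constant independent of `P`. -/
theorem stmt_9 {Ω : Type*} [MeasurableSpace Ω] (μ : Measure Ω) [IsProbabilityMeasure μ]
    (K : ℕ) (hK : 0 < K) (d : Fin K → ℕ) (hd : ∀ i, 0 < d i)
    (σ2 P Pf α c : ℝ) (hσ2 : 0 < σ2) (hP : 0 < P) (hPf : 0 < Pf) (hα : 0 < α)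
    (hPα : P = α * Pf) (hc : 0 ≤ c)
    (S Shat : (Σ i : Fin K, Fin (d i)) → Ω → ℝ)
    (J : (Σ i : Fin K, Fin (d i)) → (Σ i : Fin K, Fin (d i)) → Ω → ℝ)
    (hSmeas : ∀ s, Measurable (S s)) (hShatmeas : ∀ s, Measurable (Shat s))
    (hJmeas : ∀ s p, Measurable (J s p))
    (hSpos : ∀ s, ∀ᵐ ω ∂μ, 0 ≤ S s ω) (hShatpos : ∀ s, ∀ᵐ ω ∂μ, 0 ≤ Shat s ω)
    (hident : ∀ s, IdentDistrib (S s) (Shat s) μ μ)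
    (hSint : ∀ s, Integrable (fun ω => Real.logb 2 (1 + (P / d s.1) * S s ω / σ2)) μ)
    (hJpos : ∀ s p, ∀ᵐ ω ∂μ, 0 ≤ J s p ω)
    (hJint : ∀ s p, Integrable (J s p) μ)
    (hJmean : ∀ s p, ∫ ω, J s p ω ∂μ ≤ c * σ2 / Pf) :
    ∑ s : Σ i : Fin K, Fin (d i),
      ((∫ ω, Real.logb 2 (1 + (P / d s.1) * S s ω / σ2) ∂μ)
        - ∫ ω, Real.logb 2 (1 + (P / d s.1) * Shat s ω
            / ((∑ p ∈ Finset.univ.erase s, (P / d p.1) * J s p ω) + σ2)) ∂μ)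
      ≤ ∑ i : Fin K, (d i : ℝ) * Real.logb 2 (1 + α * c * (K - 1 / d i)) :=
  stmt_9_general μ K d hd σ2 P Pf α c hσ2 hP hPf hPα S Shat J hShatpos hident hSint hJpos hJint
    hJmean
end
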